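/- (Time-time Ricci component from chain abundances.) Let n ≥ 2 be an integer, T > 0, and R, R₀₀ arbitrary real numbers. With α_k = -nk/(12(kn+2)((k+1)n+2)) and β_k = nk/(12((k+1)n+2)), define for k = 1,2,3: Q_k = T^{3n}·( 1 + (3/k)·α_k·R·T² + (3/k)·β_k·R₀₀·T² ). Then (n+2)·Q₁ - (5n+4)·Q₂ + (4n+2)·Q₃ = - ( n³ / ( 4(2n+2)(3n+2) ) ) · R₀₀ · T^{3n+2}; equivalently, R₀₀ = - ( 4(2n+2)(3n+2) / (n³·T^{3n+2}) ) · ( (n+2)Q₁ - (5n+4)Q₂ + (4n+2)Q₃ ). -/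
import Mathlib


/-- `α_k = -nk/(12(kn+2)((k+1)n+2))`, the coefficient of the scalar curvature `R(0)` in the
curvature expansion of the expected number of k-chains in a small causal diamond. -/
noncomputable def alphaCoeff (n k : ℕ) : ℝ :=
  -((n : ℝ) * k) / (12 * ((k : ℝ) * n + 2) * (((k : ℝ) + 1) * n + 2))

/-- `β_k = nk/(12((k+1)n+2))`, the coefficient of `R₀₀(0)` in the curvature expansion of
the expected number of k-chains in a small causal diamond. -/
noncomputable def betaCoeff (n k : ℕ) : ℝ :=
  (n : ℝ) * k / (12 * (((k : ℝ) + 1) * n + 2))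

/-- The ρ-independent combination `Q_k = T^{3n}(1 + (3/k)α_k R T² + (3/k)β_k R₀₀ T²)`
of k-chain abundances, truncated at its leading curvature correction. -/
noncomputable def Qchain (n : ℕ) (T R R₀₀ : ℝ) (k : ℕ) : ℝ :=
  T ^ (3 * n) *
    (1 + (3 / (k : ℝ)) * alphaCoeff n k * R * T ^ 2 +
      (3 / (k : ℝ)) * betaCoeff n k * R₀₀ * T ^ 2)

/-- Time-time Ricci component from chain abundances:
`(n+2)Q₁ - (5n+4)Q₂ + (4n+2)Q₃ = -(n³/(4(2n+2)(3n+2)))·R₀₀·T^{3n+2}`; equivalently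
`R₀₀ = -(4(2n+2)(3n+2)/(n³ T^{3n+2}))·((n+2)Q₁ - (5n+4)Q₂ + (4n+2)Q₃)`. -/
theorem stmt15 (n : ℕ) (hn : 2 ≤ n) (T R R₀₀ : ℝ) (hT : 0 < T) :
    ((n : ℝ) + 2) * Qchain n T R R₀₀ 1 - (5 * (n : ℝ) + 4) * Qchain n T R R₀₀ 2 +
        (4 * (n : ℝ) + 2) * Qchain n T R R₀₀ 3 =
      -((n : ℝ) ^ 3 / (4 * (2 * (n : ℝ) + 2) * (3 * (n : ℝ) + 2))) * R₀₀ * T ^ (3 * n + 2) ∧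
    R₀₀ = -(4 * (2 * (n : ℝ) + 2) * (3 * (n : ℝ) + 2) / ((n : ℝ) ^ 3 * T ^ (3 * n + 2))) *
        (((n : ℝ) + 2) * Qchain n T R R₀₀ 1 - (5 * (n : ℝ) + 4) * Qchain n T R R₀₀ 2 +
          (4 * (n : ℝ) + 2) * Qchain n T R R₀₀ 3) := by
  have hx : (0:ℝ) < (n:ℝ) := by positivity
  have h1 : (0:ℝ) < (n:ℝ) + 2 := by linarith
  have h2 : (0:ℝ) < 2*(n:ℝ) + 2 := by linarith
  have h3 : (0:ℝ) < 3*(n:ℝ) + 2 := by linarith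
  have h4 : (0:ℝ) < 4*(n:ℝ) + 2 := by linarith
  have hTn : (0:ℝ) < T ^ (3*n) := by positivity
  have key : ((n : ℝ) + 2) * Qchain n T R R₀₀ 1 - (5 * (n : ℝ) + 4) * Qchain n T R R₀₀ 2 +
        (4 * (n : ℝ) + 2) * Qchain n T R R₀₀ 3 =
      -((n : ℝ) ^ 3 / (4 * (2 * (n : ℝ) + 2) * (3 * (n : ℝ) + 2))) * R₀₀ * T ^ (3 * n + 2) := by
    simp only [Qchain, alphaCoeff, betaCoeff, pow_add]
    push_cast
    field_simp
    ring
  refine ⟨key, ?_⟩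
  rw [key, pow_add]
  field_simp
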